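/- Let n ≥ 3 be an integer and let α_1, …, α_{n-1} be the complex roots of f_{1,n}(X), listed with multiplicity (f_{1,n} is monic of degree n−1 and splits over ℂ). Then the discriminant of f_{1,n} satisfies ∏_{1 ≤ i < j ≤ n-1} (α_i − α_j)² = (−1)^{(n-1)(n+2)/2} · 2 · n^{n-3} · (n+1)^{n-2}. -/
import Mathlib
open Polynomial Finset

noncomputable def f1 (n : ℕ) : Polynomial ℤ :=
  ∑ k ∈ Finset.Icc 1 n, C (k : ℤ) * X ^ (n - k)

lemma f1_succ (n : ℕ) : f1 (n+1) = X * f1 n + C ((n:ℤ)+1) := by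
  rw [f1, f1, Finset.sum_Icc_succ_top (by omega : 1 ≤ n + 1), Finset.mul_sum]
  congr 1
  · apply Finset.sum_congr rfl
    intro k hk
    simp only [Finset.mem_Icc] at hk
    have : n + 1 - k = (n - k) + 1 := by omega
    rw [this, pow_succ]
    ring
  · push_cast; simp

lemma key (n : ℕ) : (X - 1)^2 * f1 (n+1) = X^(n+2) - C ((n:ℤ)+2) * X + C ((n:ℤ)+1) := by
  induction n with
  | zero => simp [f1]; ring
  | succ m ih =>
    rw [f1_succ]
    push_cast
    push_cast at ih
    simp only [map_add, map_one, map_ofNat] at ih ⊢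
    linear_combination (X : ℤ[X]) * ih

lemma pairing (d : ℕ) (g : Fin d → ℂ) :
    (∏ i, ∏ j ∈ Finset.Ioi i, (g i - g j)^2)
      = (-1:ℂ) ^ (d * (d-1) / 2) * ∏ i, ∏ j ∈ Finset.univ.erase i, (g i - g j) := by
  have herase : ∀ i : Fin d, Finset.univ.erase i = Finset.Iio i ∪ Finset.Ioi i := by
    intro i; ext j
    simp only [Finset.mem_erase, Finset.mem_union, Finset.mem_Iio, Finset.mem_Ioi,
      Finset.mem_univ, and_true]
    exact ne_iff_lt_or_gt
  have hdisj : ∀ i : Fin d, Disjoint (Finset.Iio i) (Finset.Ioi i) := by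
    intro i
    rw [Finset.disjoint_left]
    intro a ha hb
    simp only [Finset.mem_Iio, Finset.mem_Ioi] at ha hb
    exact absurd hb (not_lt_of_gt ha)
  have hswap : (∏ i, ∏ j ∈ Finset.Iio i, (g i - g j))
      = ∏ j, ∏ i ∈ Finset.Ioi j, (g i - g j) := by
    apply Finset.prod_comm'
    intro x y
    simp [Finset.mem_Iio, Finset.mem_Ioi]
  have h1 : ∀ i : Fin d, (∏ j ∈ Finset.Ioi i, (g j - g i))
      = (-1:ℂ)^(Finset.Ioi i).card * ∏ j ∈ Finset.Ioi i, (g i - g j) := by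
    intro i
    rw [← Finset.prod_const, ← Finset.prod_mul_distrib]
    exact Finset.prod_congr rfl fun j _ => by ring
  have hN : ∑ i : Fin d, (Finset.Ioi i).card = d * (d-1) / 2 := by
    have : ∀ i : Fin d, (Finset.Ioi i).card = d - 1 - i.val := fun i => Fin.card_Ioi i
    rw [Finset.sum_congr rfl fun i _ => this i]
    rw [Fin.sum_univ_eq_sum_range (fun k => d - 1 - k) d]
    rw [Finset.sum_range_reflect (fun k => k) d]
    exact Finset.sum_range_id d
  have hP : (∏ i, ∏ j ∈ Finset.univ.erase i, (g i - g j))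
      = (-1:ℂ) ^ (d * (d-1) / 2) * ∏ i, ∏ j ∈ Finset.Ioi i, (g i - g j)^2 := by
    calc (∏ i, ∏ j ∈ Finset.univ.erase i, (g i - g j))
        = ∏ i, ((∏ j ∈ Finset.Iio i, (g i - g j)) * ∏ j ∈ Finset.Ioi i, (g i - g j)) := by
          exact Finset.prod_congr rfl fun i _ => by rw [herase i, Finset.prod_union (hdisj i)]
      _ = (∏ i, ∏ j ∈ Finset.Iio i, (g i - g j)) * ∏ i, ∏ j ∈ Finset.Ioi i, (g i - g j) :=
          Finset.prod_mul_distrib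
      _ = (∏ i, ((-1:ℂ)^(Finset.Ioi i).card * ∏ j ∈ Finset.Ioi i, (g i - g j)))
            * ∏ i, ∏ j ∈ Finset.Ioi i, (g i - g j) := by
          rw [hswap]; congr 1; exact Finset.prod_congr rfl fun i _ => h1 i
      _ = ((-1:ℂ) ^ (∑ i : Fin d, (Finset.Ioi i).card))
            * ((∏ i, ∏ j ∈ Finset.Ioi i, (g i - g j))
              * ∏ i, ∏ j ∈ Finset.Ioi i, (g i - g j)) := by
          rw [Finset.prod_mul_distrib, Finset.prod_pow_eq_pow_sum]; ring
      _ = (-1:ℂ) ^ (d * (d-1) / 2) * ∏ i, ∏ j ∈ Finset.Ioi i, (g i - g j)^2 := by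
          rw [hN]
          congr 1
          rw [← Finset.prod_mul_distrib]
          exact Finset.prod_congr rfl fun i _ => by
            rw [← Finset.prod_mul_distrib]
            exact Finset.prod_congr rfl fun j _ => (sq _).symm
  rw [hP, ← mul_assoc, ← pow_add, ← two_mul]
  rw [pow_mul]
  norm_num

lemma gauss (N : ℕ) : 2 * ∑ k ∈ Finset.Icc 1 N, (k:ℤ) = N * (N+1) := by
  induction N with
  | zero => simp
  | succ M ih =>
    rw [Finset.sum_Icc_succ_top (by omega : 1 ≤ M + 1)]
    push_cast
    push_cast at ih
    linarith

/-- If `α 0, …, α (n-2)` are the complex roots of `f1 n` (with multiplicity),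
then `∏_{i<j} (α i − α j)² = (−1)^((n−1)(n+2)/2) · 2 · n^(n−3) · (n+1)^(n−2)`. -/
theorem stmt7 (n : ℕ) (hn : 3 ≤ n) (α : Fin (n - 1) → ℂ)
    (hroots : (f1 n).map (algebraMap ℤ ℂ) = ∏ i : Fin (n - 1), (X - C (α i))) :
    (∏ i : Fin (n - 1), ∏ j ∈ Finset.univ.filter (fun j => i < j), (α i - α j) ^ 2)
      = (-1 : ℂ) ^ ((n - 1) * (n + 2) / 2) * 2 * (n : ℂ) ^ (n - 3) * ((n : ℂ) + 1) ^ (n - 2) := by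
  obtain ⟨m, rfl⟩ : ∃ m, n = m + 3 := ⟨n - 3, by omega⟩
  set F : Polynomial ℂ := ∏ i : Fin (m + 3 - 1), (X - C (α i)) with hFdef
  -- the key identity over ℂ
  have keyF : (X - 1)^2 * F = X^(m+4) - C ((m:ℂ)+4) * X + C ((m:ℂ)+3) := by
    have h := congrArg (Polynomial.map (algebraMap ℤ ℂ)) (key (m+2))
    simp only [Polynomial.map_mul, Polynomial.map_pow, Polynomial.map_sub, Polynomial.map_add,
      Polynomial.map_one, Polynomial.map_X, Polynomial.map_C] at h
    rw [show m + 2 + 1 = m + 3 from rfl] at h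
    rw [hroots] at h
    rw [show m + 2 + 2 = m + 4 from rfl] at h
    rw [h]
    have e1 : ((algebraMap ℤ ℂ) (↑(m + 2) + 2)) = (m:ℂ)+4 := by simp only [eq_intCast]; push_cast; ring
    have e2 : ((algebraMap ℤ ℂ) (↑(m + 2) + 1)) = (m:ℂ)+3 := by simp only [eq_intCast]; push_cast; ring
    rw [e1, e2]
  -- each α i is a root of F
  have hevalF : ∀ i, eval (α i) F = 0 := by
    intro i
    rw [hFdef, eval_prod]
    exact Finset.prod_eq_zero (Finset.mem_univ i) (by simp)
  -- the degree-(m+4) relation satisfied by each root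
  have hαpow : ∀ i, (α i)^(m+4) - ((m:ℂ)+4) * α i + ((m:ℂ)+3) = 0 := by
    intro i
    have h := congrArg (eval (α i)) keyF
    simp only [eval_mul, eval_pow, eval_sub, eval_add, eval_X, eval_C, eval_one,
      hevalF i, mul_zero] at h
    exact h.symm
  -- α i * (α i ^ (m+3) - 1) = (m+3)(α i - 1)
  have hh4 : ∀ i, α i * ((α i)^(m+3) - 1) = ((m:ℂ)+3) * (α i - 1) := by
    intro i
    linear_combination hαpow i
  -- derivative of F at a root
  have hder : ∀ i, eval (α i) (derivative F) = ∏ j ∈ Finset.univ.erase i, (α i - α j) := by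
    intro i
    have hsplit : F = (∏ j ∈ Finset.univ.erase i, (X - C (α j))) * (X - C (α i)) :=
      (Finset.prod_erase_mul _ _ (Finset.mem_univ i)).symm
    rw [hsplit, derivative_mul, eval_add, eval_mul, eval_mul]
    simp [eval_prod]
  -- (α i - 1)^2 * F'(α i) = (m+4)(α i^{m+3} - 1)
  have hd2 : ∀ i, (α i - 1)^2 * (∏ j ∈ Finset.univ.erase i, (α i - α j))
      = ((m:ℂ)+4) * ((α i)^(m+3) - 1) := by
    intro i
    have h := congrArg (fun p => eval (α i) (derivative p)) keyF
    simp only [derivative_mul, derivative_pow, derivative_sub, derivative_add, derivative_X,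
      derivative_one, derivative_C, derivative_X_pow, eval_add, eval_mul, eval_sub, eval_pow,
      eval_X, eval_C, eval_one, eval_natCast, hevalF i, hder i, mul_zero, sub_zero, mul_one,
      zero_mul, add_zero, zero_add] at h
    push_cast at h
    linear_combination h
  -- product of roots (eval at 0)
  have hA : (∏ i, (-(α i))) = (m:ℂ)+3 := by
    have h := congrArg (eval 0) keyF
    simp only [eval_mul, eval_pow, eval_sub, eval_add, eval_X, eval_C, eval_one,
      hFdef, eval_prod] at h
    rw [zero_pow (by omega : m + 4 ≠ 0)] at h
    simpa using h
  -- eval at 1 (Gauss sum)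
  have hB : 2 * (∏ i, ((1:ℂ) - α i)) = ((m:ℂ)+3) * ((m:ℂ)+4) := by
    have h := congrArg (eval 1) hroots
    rw [eval_one_map] at h
    have hev : (f1 (m+3)).eval 1 = ∑ k ∈ Finset.Icc 1 (m+3), (k:ℤ) := by
      rw [f1, eval_finset_sum]
      exact Finset.sum_congr rfl fun k _ => by simp
    rw [hev, eval_prod] at h
    simp only [eval_sub, eval_X, eval_C] at h
    have h2 := gauss (m+3)
    have h3 : (2:ℂ) * ((∑ k ∈ Finset.Icc 1 (m+3), (k:ℤ) : ℤ) : ℂ)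
        = ((m:ℂ)+3) * ((m:ℂ)+4) := by
      have hc := congrArg (fun z : ℤ => (z : ℂ)) h2
      push_cast at hc ⊢
      linear_combination hc
    rw [eq_intCast] at h
    rw [h] at h3
    exact h3
  -- nonvanishing constants
  have h3ne : ((m:ℂ)+3) ≠ 0 := by
    have : ((m+3 : ℕ) : ℂ) ≠ 0 := Nat.cast_ne_zero.mpr (by omega)
    push_cast at this; exact this
  have h4ne : ((m:ℂ)+4) ≠ 0 := by
    have : ((m+4 : ℕ) : ℂ) ≠ 0 := Nat.cast_ne_zero.mpr (by omega)
    push_cast at this; exact this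
  have hBne : (∏ i, ((1:ℂ) - α i)) ≠ 0 := by
    intro h0
    rw [h0, mul_zero] at hB
    exact (mul_ne_zero h3ne h4ne) hB.symm
  have hbne : (∏ i, (α i - 1)) ≠ 0 := by
    rw [Finset.prod_ne_zero_iff]
    intro i _ hc
    exact (Finset.prod_ne_zero_iff.mp hBne i (Finset.mem_univ i)) (by linear_combination -hc)
  have hcard : (Finset.univ : Finset (Fin (m+3-1))).card = m + 2 := by simp
  set a := ∏ i, α i with hadef
  set b := ∏ i, (α i - 1) with hbdef
  set q := ∏ i, ((α i)^(m+3) - 1) with hqdef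
  set p := ∏ i, ∏ j ∈ Finset.univ.erase i, (α i - α j) with hpdef
  have hprod1 : b^2 * p = ((m:ℂ)+4)^(m+2) * q := by
    rw [hbdef, hpdef, hqdef, ← Finset.prod_pow, ← Finset.prod_mul_distrib, ← hcard,
      ← Finset.prod_const, ← Finset.prod_mul_distrib]
    exact Finset.prod_congr rfl fun i _ => hd2 i
  have hprod2 : a * q = ((m:ℂ)+3)^(m+2) * b := by
    rw [hadef, hqdef, hbdef, ← Finset.prod_mul_distrib, ← hcard,
      ← Finset.prod_const, ← Finset.prod_mul_distrib]
    exact Finset.prod_congr rfl fun i _ => hh4 i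
  have hsgnA : (∏ i, (-(α i))) = (-1:ℂ)^(m+2) * a := by
    rw [hadef, ← hcard, ← Finset.prod_const, ← Finset.prod_mul_distrib]
    exact Finset.prod_congr rfl fun i _ => by ring
  have hsgnB : (∏ i, ((1:ℂ) - α i)) = (-1:ℂ)^(m+2) * b := by
    rw [hbdef, ← hcard, ← Finset.prod_const, ← Finset.prod_mul_distrib]
    exact Finset.prod_congr rfl fun i _ => by ring
  have heps : ((-1:ℂ)^(m+2))^2 = 1 := by
    rw [← pow_mul, mul_comm, pow_mul]; norm_num
  have ea : (-1:ℂ)^(m+2) * a = (m:ℂ)+3 := by rw [← hsgnA]; exact hA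
  have eb : 2 * ((-1:ℂ)^(m+2) * b) = ((m:ℂ)+3) * ((m:ℂ)+4) := by rw [← hsgnB]; exact hB
  have ea' : a = (-1:ℂ)^(m+2) * ((m:ℂ)+3) := by
    linear_combination ((-1:ℂ)^(m+2)) * ea - a * heps
  have eb' : 2 * b = (-1:ℂ)^(m+2) * (((m:ℂ)+3) * ((m:ℂ)+4)) := by
    linear_combination ((-1:ℂ)^(m+2)) * eb - 2 * b * heps
  have hab : a * b * p = ((m:ℂ)+4)^(m+2) * ((m:ℂ)+3)^(m+2) := by
    apply mul_left_cancel₀ hbne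
    calc b * (a * b * p) = a * (b^2 * p) := by ring
      _ = a * (((m:ℂ)+4)^(m+2) * q) := by rw [hprod1]
      _ = ((m:ℂ)+4)^(m+2) * (a * q) := by ring
      _ = ((m:ℂ)+4)^(m+2) * (((m:ℂ)+3)^(m+2) * b) := by rw [hprod2]
      _ = b * (((m:ℂ)+4)^(m+2) * ((m:ℂ)+3)^(m+2)) := by ring
  have e2 : ((m:ℂ)+3)^2 * ((m:ℂ)+4) * p = 2 * (((m:ℂ)+4)^(m+2) * ((m:ℂ)+3)^(m+2)) := by
    linear_combination (-(2*b*p)) * ea' + (-((-1:ℂ)^(m+2)*((m:ℂ)+3)*p)) * eb'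
      + (-(((m:ℂ)+3)^2*((m:ℂ)+4)*p)) * heps + 2 * hab
  have hpn : p = 2 * ((m:ℂ)+3)^m * ((m:ℂ)+4)^(m+1) := by
    have hne : ((m:ℂ)+3)^2 * ((m:ℂ)+4) ≠ 0 := mul_ne_zero (pow_ne_zero _ h3ne) h4ne
    apply mul_left_cancel₀ hne
    rw [e2]; ring
  -- final assembly
  have hfilter : ∀ i : Fin (m+3-1), Finset.univ.filter (fun j => i < j) = Finset.Ioi i := by
    intro i; ext j; simp
  have hsignexp : (m+2)*(m+5)/2 = (m+2)*(m+1)/2 + 2*(m+2) := by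
    obtain ⟨c, hc⟩ := Nat.even_mul_succ_self (m+1)
    have e1 : (m+2)*(m+5) = (m+1)*(m+2) + 4*(m+2) := by ring
    have e0 : (m+2)*(m+1) = (m+1)*(m+2) := by ring
    omega
  calc (∏ i : Fin (m+3-1), ∏ j ∈ Finset.univ.filter (fun j => i < j), (α i - α j)^2)
      = ∏ i : Fin (m+3-1), ∏ j ∈ Finset.Ioi i, (α i - α j)^2 :=
        Finset.prod_congr rfl fun i _ => by rw [hfilter i]
    _ = (-1:ℂ)^((m+3-1)*((m+3-1)-1)/2) * p := pairing (m+3-1) α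
    _ = (-1:ℂ)^((m+2)*(m+1)/2) * (2 * ((m:ℂ)+3)^m * ((m:ℂ)+4)^(m+1)) := by
        rw [hpn]; rfl
    _ = (-1:ℂ)^((m+3-1)*(m+3+2)/2) * 2 * ((m+3 : ℕ) : ℂ)^(m+3-3)
          * (((m+3 : ℕ) : ℂ) + 1)^(m+3-2) := by
        rw [show (m+3-1)*(m+3+2)/2 = (m+2)*(m+5)/2 from rfl,
          show m+3-3 = m from rfl, show m+3-2 = m+1 from rfl]
        rw [hsignexp]
        have h1 : (-1:ℂ)^((m+2)*(m+1)/2 + 2*(m+2)) = (-1:ℂ)^((m+2)*(m+1)/2) := by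
          rw [pow_add, pow_mul]; norm_num
        rw [h1]
        push_cast
        ring
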